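/- arXiv:1704.04992 — 5 statements merged into one kernel-verified Lean document; each statement's English description precedes it below -/
import Mathlib

section
/- Let φ and φ̃ be nonzero vectors in a real inner product space such that the angle θ between them satisfies θ < π/2 (equivalently ⟨φ, φ̃⟩ > 0), and suppose ‖φ − φ̃‖ ≤ ε. Then the normalized vectors satisfy ‖ φ/‖φ‖ − φ̃/‖φ̃‖ ‖ ≤ √2 · ε / ‖φ‖. -/
/-!
Let `θ` be the angle between `φ` and `φt`. Then `‖φ‖ sin θ` is the distance from `φ` to the line
spanned by `φt`, so it is at most `‖φ - φt‖ ≤ ε`. The two unit vectors are at distance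
`2 sin (θ / 2)`, which is at most `√2 sin θ = 2√2 sin (θ / 2) cos (θ / 2)` as long as `θ ≤ π / 2`.
-/

open Real NormedSpace RealInnerProductSpace

namespace InnerProductGeometry

variable {V : Type*} [NormedAddCommGroup V] [InnerProductSpace ℝ V]

theorem norm_mul_sin_angle_le_norm_sub (x y : V) : ‖x‖ * sin (angle x y) ≤ ‖x - y‖ := by
  rcases eq_or_ne y 0 with rfl | hy
  · simp
  have hy₀ : 0 < ‖y‖ := norm_pos_iff.2 hy
  refine le_of_mul_le_mul_right ?_ hy₀
  -- `‖y‖² ‖x - y‖² - (‖x‖² ‖y‖² - ⟪x, y⟫²) = (‖y‖² - ⟪x, y⟫)²`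
  have hsq : ‖x‖ ^ 2 * ‖y‖ ^ 2 - ⟪x, y⟫ ^ 2 ≤ (‖x - y‖ * ‖y‖) ^ 2 := by
    rw [mul_pow, norm_sub_sq_real]
    nlinarith [sq_nonneg (‖y‖ ^ 2 - ⟪x, y⟫)]
  calc ‖x‖ * sin (angle x y) * ‖y‖ = sin (angle x y) * (‖x‖ * ‖y‖) := by ring
    _ = √(‖x‖ ^ 2 * ‖y‖ ^ 2 - ⟪x, y⟫ ^ 2) := by
      rw [sin_angle_mul_norm_mul_norm, real_inner_self_eq_norm_sq, real_inner_self_eq_norm_sq, ← sq]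
    _ ≤ ‖x - y‖ * ‖y‖ := sqrt_le_iff.2 ⟨by positivity, hsq⟩

theorem norm_sub_le_sqrt_two_mul_sin_angle {u v : V} (hu : ‖u‖ = 1) (hv : ‖v‖ = 1)
    (h : angle u v ≤ π / 2) : ‖u - v‖ ≤ √2 * sin (angle u v) := by
  have hcos₀ : 0 ≤ cos (angle u v) :=
    cos_nonneg_of_neg_pi_div_two_le_of_le (by linarith [pi_pos, angle_nonneg u v]) h
  have hcos₁ : cos (angle u v) ≤ 1 := cos_le_one _
  refine le_of_pow_le_pow_left₀ two_ne_zero (mul_nonneg (sqrt_nonneg 2) (sin_angle_nonneg u v)) ?_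
  calc ‖u - v‖ ^ 2 = 2 - 2 * cos (angle u v) := by
        rw [norm_sub_sq_real, hu, hv, inner_eq_cos_angle_of_norm_eq_one hu hv]; ring
    _ ≤ 2 * (1 - cos (angle u v) ^ 2) := by nlinarith
    _ = (√2 * sin (angle u v)) ^ 2 := by
        rw [mul_pow, sq_sqrt zero_le_two, sin_sq]

end InnerProductGeometry

open InnerProductGeometry

theorem normalized_vectors_close {E : Type*} [NormedAddCommGroup E] [InnerProductSpace ℝ E]
    (φ φt : E) (ε : ℝ) (hφ : φ ≠ 0) (hφt : φt ≠ 0)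
    (hangle : (0 : ℝ) < inner ℝ φ φt) (h : ‖φ - φt‖ ≤ ε) :
    ‖(‖φ‖)⁻¹ • φ - (‖φt‖)⁻¹ • φt‖ ≤ Real.sqrt 2 * ε / ‖φ‖ := by
  have hθ : angle φ φt ≤ π / 2 :=
    arccos_le_pi_div_two.2 (div_nonneg hangle.le (by positivity))
  have hφ₀ : 0 < ‖φ‖ := norm_pos_iff.2 hφ
  calc ‖(‖φ‖)⁻¹ • φ - (‖φt‖)⁻¹ • φt‖ = ‖normalize φ - normalize φt‖ := rfl
    _ ≤ √2 * sin (angle φ φt) := by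
      simpa using norm_sub_le_sqrt_two_mul_sin_angle (norm_normalize hφ) (norm_normalize hφt)
        (by simpa using hθ)
    _ = √2 * (‖φ‖ * sin (angle φ φt)) / ‖φ‖ := by field_simp
    _ ≤ √2 * ε / ‖φ‖ := by
      gcongr
      exact (norm_mul_sin_angle_le_norm_sub φ φt).trans h
end

section
/- Let P̃ ∈ ℝ^{N×m} and Q̃ ∈ ℝ^{N×n} be isometries, i.e. P̃ᵀP̃ = I_m and Q̃ᵀQ̃ = I_n, and let M = P̃ᵀQ̃ ∈ ℝ^{m×n}. Suppose u ∈ ℝ^m and v ∈ ℝ^n form a singular pair of M with singular value σ, i.e. M v = σ u and Mᵀ u = σ v. Then the unitary-type operator W = (2P̃P̃ᵀ − I_N)(2Q̃Q̃ᵀ − I_N) satisfies W(Q̃v) = 2σ · P̃u − Q̃v and W(P̃u) = (4σ² − 1) · P̃u − 2σ · Q̃v; in particular the two-dimensional subspace Span(P̃u, Q̃v) is invariant under W. -/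
/-!
`2 P Pᵀ - 1` is the reflection through the column space of the isometry `P`: it fixes `P x` and
sends `y` to `2 P (Pᵀ y) - y`. Since `Pᵀ Q v = σ u` and `Qᵀ P u = σ v`, applying the two
reflections to `Q v` and `P u` only ever produces combinations of `P u` and `Q v`.
-/

open Matrix

namespace Matrix

variable {R ι κ : Type*} [CommRing R] [Fintype ι] [DecidableEq ι] [Fintype κ]

theorem two_smul_mul_transpose_sub_one_mulVec (P : Matrix ι κ R) (y : ι → R) :
    ((2 : R) • (P * Pᵀ) - 1) *ᵥ y = (2 : R) • P *ᵥ (Pᵀ *ᵥ y) - y := by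
  rw [sub_mulVec, one_mulVec, smul_mulVec, ← mulVec_mulVec]

theorem two_smul_mul_transpose_sub_one_mulVec_mulVec [DecidableEq κ] {P : Matrix ι κ R}
    (hP : Pᵀ * P = 1) (x : κ → R) :
    ((2 : R) • (P * Pᵀ) - 1) *ᵥ (P *ᵥ x) = P *ᵥ x := by
  rw [two_smul_mul_transpose_sub_one_mulVec, mulVec_mulVec _ Pᵀ P, hP, one_mulVec, two_smul,
    add_sub_cancel_right]

end Matrix

theorem quantum_walk_invariant_subspace {N m n : ℕ}
    (Pt : Matrix (Fin N) (Fin m) ℝ) (Qt : Matrix (Fin N) (Fin n) ℝ)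
    (hPt : Ptᵀ * Pt = 1) (hQt : Qtᵀ * Qt = 1)
    (M : Matrix (Fin m) (Fin n) ℝ) (hM : M = Ptᵀ * Qt)
    (u : Fin m → ℝ) (v : Fin n → ℝ) (σ : ℝ)
    (hMv : M.mulVec v = σ • u) (hMu : Mᵀ.mulVec u = σ • v)
    (W : Matrix (Fin N) (Fin N) ℝ)
    (hW : W = ((2 : ℝ) • (Pt * Ptᵀ) - 1) * ((2 : ℝ) • (Qt * Qtᵀ) - 1)) :
    W.mulVec (Qt.mulVec v) = (2 * σ) • Pt.mulVec u - Qt.mulVec v ∧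
      W.mulVec (Pt.mulVec u) = (4 * σ ^ 2 - 1) • Pt.mulVec u - (2 * σ) • Qt.mulVec v := by
  subst hW hM
  rw [← mulVec_mulVec] at hMv
  rw [transpose_mul, transpose_transpose, ← mulVec_mulVec] at hMu
  have hPQv :
      ((2 : ℝ) • (Pt * Ptᵀ) - 1) *ᵥ (Qt *ᵥ v) = (2 * σ) • Pt *ᵥ u - Qt *ᵥ v := by
    rw [two_smul_mul_transpose_sub_one_mulVec, hMv, mulVec_smul, smul_smul]
  have hQPu :
      ((2 : ℝ) • (Qt * Qtᵀ) - 1) *ᵥ (Pt *ᵥ u) = (2 * σ) • Qt *ᵥ v - Pt *ᵥ u := by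
    rw [two_smul_mul_transpose_sub_one_mulVec, hMu, mulVec_smul, smul_smul]
  refine ⟨?_, ?_⟩
  · rw [← mulVec_mulVec, two_smul_mul_transpose_sub_one_mulVec_mulVec hQt, hPQv]
  · rw [← mulVec_mulVec, hQPu, mulVec_sub, mulVec_smul, hPQv,
      two_smul_mul_transpose_sub_one_mulVec_mulVec hPt]
    module
end

section
/- Let A ∈ ℝ^{m×n} be a nonzero matrix and p ∈ [0,1]. Define s_{2p}(A) = max_{i∈[m]} Σ_{j∈[n]} |A_{ij}|^{2p} and s_{2(1−p)}(Aᵀ) = max_{j∈[n]} Σ_{i∈[m]} |A_{ij}|^{2(1−p)}, and set μ_p(A) = √(s_{2p}(A) · s_{2(1−p)}(Aᵀ)). Define matrices P, Q ∈ ℝ^{m×n} by P_{ij} = sign(A_{ij}) |A_{ij}|^{p} / √(s_{2p}(A)) and Q_{ij} = |A_{ij}|^{1−p} / √(s_{2(1−p)}(Aᵀ)). Then every row of P has ℓ₂-norm at most 1, every column of Q has ℓ₂-norm at most 1, and P ∘ Q = A / μ_p(A). -/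
open Matrix

namespace Real

lemma sign_mul_abs_eq (x : ℝ) : sign x * |x| = x := by
  rcases lt_trichotomy x 0 with hx | rfl | hx
  · rw [sign_of_neg hx, abs_of_neg hx, neg_one_mul, neg_neg]
  · rw [sign_zero, zero_mul]
  · rw [sign_of_pos hx, abs_of_pos hx, one_mul]

lemma sign_sq_le_one (x : ℝ) : sign x ^ 2 ≤ 1 := by
  rcases sign_apply_eq x with h | h | h <;> rw [h] <;> norm_num

lemma rpow_sq {x : ℝ} (hx : 0 ≤ x) (q : ℝ) : (x ^ q) ^ 2 = x ^ (2 * q) := by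
  rw [mul_comm, rpow_mul hx, rpow_two]

lemma sq_sign_mul_abs_rpow_le (x p : ℝ) : (sign x * |x| ^ p) ^ 2 ≤ |x| ^ (2 * p) := by
  rw [mul_pow, rpow_sq (abs_nonneg x)]
  exact mul_le_of_le_one_left (rpow_nonneg (abs_nonneg x) _) (sign_sq_le_one x)

/-- At `x = 0` it is the sign that vanishes: one of the two powers is `0 ^ 0 = 1` when
`p ∈ {0, 1}`. -/
lemma sign_mul_abs_rpow_mul_abs_rpow_one_sub (x p : ℝ) :
    sign x * |x| ^ p * |x| ^ (1 - p) = x := by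
  rcases eq_or_ne x 0 with rfl | hx
  · rw [sign_zero, zero_mul, zero_mul]
  · rw [mul_assoc, ← rpow_add (abs_pos.mpr hx), add_sub_cancel, rpow_one, sign_mul_abs_eq]

end Real

lemma sqrt_sum_sq_div_sqrt_le_one {ι : Type*} [Fintype ι] (v w : ι → ℝ) {s : ℝ}
    (hvw : ∀ j, v j ^ 2 ≤ w j) (hws : ∑ j, w j ≤ s) :
    Real.sqrt (∑ j, (v j / Real.sqrt s) ^ 2) ≤ 1 := by
  rcases le_or_gt s 0 with hs | hs
  · simp [Real.sqrt_eq_zero'.mpr hs]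
  refine Real.sqrt_le_one.mpr ?_
  calc ∑ j, (v j / Real.sqrt s) ^ 2 = (∑ j, v j ^ 2) / s := by
        simp only [div_pow, Real.sq_sqrt hs.le, Finset.sum_div]
    _ ≤ (∑ j, w j) / s := by gcongr with j; exact hvw j
    _ ≤ 1 := div_le_one_of_le₀ hws hs.le

lemma sum_le_iSup_sum {ι κ : Type*} [Finite ι] [Fintype κ] (f : ι → κ → ℝ) (i : ι) :
    ∑ j, f i j ≤ ⨆ i, ∑ j, f i j :=
  le_ciSup (f := fun i => ∑ j, f i j) (Finite.bddAbove_range _) i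

theorem mu_p_factorization_general {m n : ℕ} (A : Matrix (Fin m) (Fin n) ℝ)
    (p : ℝ)
    (s₁ s₂ μ : ℝ)
    (hs₁ : s₁ = ⨆ i : Fin m, ∑ j, |A i j| ^ (2 * p))
    (hs₂ : s₂ = ⨆ j : Fin n, ∑ i, |A i j| ^ (2 * (1 - p)))
    (hμ : μ = Real.sqrt (s₁ * s₂))
    (P Q : Matrix (Fin m) (Fin n) ℝ)
    (hP : ∀ i j, P i j = Real.sign (A i j) * |A i j| ^ p / Real.sqrt s₁)
    (hQ : ∀ i j, Q i j = |A i j| ^ (1 - p) / Real.sqrt s₂) :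
    (∀ i, Real.sqrt (∑ j, (P i j) ^ 2) ≤ 1) ∧
      (∀ j, Real.sqrt (∑ i, (Q i j) ^ 2) ≤ 1) ∧
      Matrix.hadamard P Q = μ⁻¹ • A := by
  refine ⟨fun i => ?_, fun j => ?_, ?_⟩
  · simp only [hP]
    exact sqrt_sum_sq_div_sqrt_le_one _ _ (fun j => Real.sq_sign_mul_abs_rpow_le _ _)
      (hs₁ ▸ sum_le_iSup_sum (fun i j => |A i j| ^ (2 * p)) i)
  · simp only [hQ]
    exact sqrt_sum_sq_div_sqrt_le_one _ _ (fun i => (Real.rpow_sq (abs_nonneg _) _).le)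
      (hs₂ ▸ sum_le_iSup_sum (fun j i => |A i j| ^ (2 * (1 - p))) j)
  · have hs₁_nonneg : 0 ≤ s₁ :=
      hs₁ ▸ Real.iSup_nonneg fun i => Finset.sum_nonneg fun j _ => by positivity
    ext i j
    rw [hadamard_apply, hP, hQ, Matrix.smul_apply, smul_eq_mul, div_mul_div_comm,
      Real.sign_mul_abs_rpow_mul_abs_rpow_one_sub, hμ, Real.sqrt_mul hs₁_nonneg, div_eq_inv_mul]

theorem mu_p_factorization {m n : ℕ} (A : Matrix (Fin m) (Fin n) ℝ) (hA : A ≠ 0)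
    (p : ℝ) (hp : p ∈ Set.Icc (0 : ℝ) 1)
    (s₁ s₂ μ : ℝ)
    (hs₁ : s₁ = ⨆ i : Fin m, ∑ j, |A i j| ^ (2 * p))
    (hs₂ : s₂ = ⨆ j : Fin n, ∑ i, |A i j| ^ (2 * (1 - p)))
    (hμ : μ = Real.sqrt (s₁ * s₂))
    (P Q : Matrix (Fin m) (Fin n) ℝ)
    (hP : ∀ i j, P i j = Real.sign (A i j) * |A i j| ^ p / Real.sqrt s₁)
    (hQ : ∀ i j, Q i j = |A i j| ^ (1 - p) / Real.sqrt s₂) :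
    (∀ i, Real.sqrt (∑ j, (P i j) ^ 2) ≤ 1) ∧
      (∀ j, Real.sqrt (∑ i, (Q i j) ^ 2) ≤ 1) ∧
      Matrix.hadamard P Q = μ⁻¹ • A :=
  mu_p_factorization_general A p s₁ s₂ μ hs₁ hs₂ hμ P Q hP hQ
end

section
/- Let A ∈ ℝ^{n×n} be symmetric positive semidefinite with spectral decomposition A = Σ_i λ_i v_i v_iᵀ, where (v_i) is an orthonormal eigenbasis and all eigenvalues satisfy 1/κ ≤ λ_i ≤ 1 for some κ ≥ 1. Let x = Σ_i β_i v_i and suppose z = Σ_i (λ_i + ε̃_i) β_i v_i with |ε̃_i| ≤ ε₁ for all i. Then ‖Ax − z‖ ≤ ε₁ ‖x‖, and if Ax and z are nonzero with ⟨Ax, z⟩ > 0, the normalized vectors satisfy ‖ Ax/‖Ax‖ − z/‖z‖ ‖ ≤ √2 · ε₁ · κ. -/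
/-!
Expanding in the eigenbasis, `A x - z = -∑ εtᵢ βᵢ vᵢ` while `A x = ∑ λᵢ βᵢ vᵢ`, so comparing
coefficients gives `‖A x - z‖ ≤ ε₁ ‖x‖` and, since `κ λᵢ ≥ 1`, `‖A x - z‖ ≤ ε₁ κ ‖A x‖`.
For the normalized vectors, let `t` be the cosine of the angle between `y = A x` and `z`. Then
`‖y/‖y‖ - z/‖z‖‖² = 2 (1 - t)`, while the distance from `y` to the line `ℝ z` gives
`‖y - z‖² ≥ ‖y‖² (1 - t²)`; as `0 ≤ t ≤ 1`, `1 - t ≤ 1 - t²` and the bound follows.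
-/

open Matrix
open scoped InnerProductSpace

section Orthonormal

variable {ι E : Type*} [Fintype ι] [NormedAddCommGroup E] [InnerProductSpace ℝ E] {v : ι → E}

theorem Orthonormal.norm_sum_smul_sq (hv : Orthonormal ℝ v) (c : ι → ℝ) :
    ‖∑ i, c i • v i‖ ^ 2 = ∑ i, c i ^ 2 := by
  rw [← real_inner_self_eq_norm_sq, hv.inner_sum]
  simp [sq]

theorem Orthonormal.norm_sum_smul_le_of_abs_le (hv : Orthonormal ℝ v) {b c : ι → ℝ} {C : ℝ}
    (h : ∀ i, |c i| ≤ C * |b i|) :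
    ‖∑ i, c i • v i‖ ≤ C * ‖∑ i, b i • v i‖ := by
  by_cases hC : 0 ≤ C
  · refine pow_le_pow_iff_left₀ (norm_nonneg _) (by positivity) two_ne_zero |>.mp ?_
    rw [mul_pow, hv.norm_sum_smul_sq, hv.norm_sum_smul_sq, Finset.mul_sum]
    gcongr with i
    rw [← sq_abs (c i), ← sq_abs (b i), ← mul_pow]
    exact pow_le_pow_left₀ (abs_nonneg _) (h i) 2
  · have hzero : ∀ i, c i = 0 ∧ b i = 0 := fun i => by
      have := h i
      have hb : |b i| = 0 := by nlinarith [abs_nonneg (c i), abs_nonneg (b i)]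
      have hc : |c i| = 0 := by nlinarith [abs_nonneg (c i)]
      exact ⟨abs_eq_zero.1 hc, abs_eq_zero.1 hb⟩
    simp [hzero]

end Orthonormal

section Normalize

variable {E : Type*} [NormedAddCommGroup E] [InnerProductSpace ℝ E] {y z : E}

theorem norm_inv_smul_sub_inv_smul_sq (hy : y ≠ 0) (hz : z ≠ 0) :
    ‖‖y‖⁻¹ • y - ‖z‖⁻¹ • z‖ ^ 2 = 2 - 2 * (⟪y, z⟫_ℝ / (‖y‖ * ‖z‖)) := by
  have ha : ‖y‖ ≠ 0 := norm_ne_zero_iff.2 hy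
  have hb : ‖z‖ ≠ 0 := norm_ne_zero_iff.2 hz
  rw [norm_sub_sq_real, norm_smul, norm_smul, real_inner_smul_left, real_inner_smul_right,
    norm_inv, norm_norm, norm_inv, norm_norm]
  field_simp
  ring

theorem norm_sq_sub_inner_sq_div_le_norm_sub_sq (y z : E) :
    ‖y‖ ^ 2 - ⟪y, z⟫_ℝ ^ 2 / ‖z‖ ^ 2 ≤ ‖y - z‖ ^ 2 := by
  rcases eq_or_ne z 0 with rfl | hz
  · simp
  have hb : 0 < ‖z‖ := norm_pos_iff.2 hz
  rw [norm_sub_sq_real]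
  have key : 0 ≤ (‖z‖ - ⟪y, z⟫_ℝ / ‖z‖) ^ 2 := sq_nonneg _
  have expand : (‖z‖ - ⟪y, z⟫_ℝ / ‖z‖) ^ 2 = ‖z‖ ^ 2 - 2 * ⟪y, z⟫_ℝ + ⟪y, z⟫_ℝ ^ 2 / ‖z‖ ^ 2 := by
    field_simp
    ring
  linarith

theorem norm_inv_smul_sub_inv_smul_le (hy : y ≠ 0) (hz : z ≠ 0) (hyz : 0 ≤ ⟪y, z⟫_ℝ) {δ : ℝ}
    (h : ‖y - z‖ ≤ δ * ‖y‖) :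
    ‖‖y‖⁻¹ • y - ‖z‖⁻¹ • z‖ ≤ √2 * δ := by
  have ha : 0 < ‖y‖ := norm_pos_iff.2 hy
  have hb : 0 < ‖z‖ := norm_pos_iff.2 hz
  set t := ⟪y, z⟫_ℝ / (‖y‖ * ‖z‖)
  have ht0 : 0 ≤ t := by positivity
  have ht1 : t ≤ 1 := div_le_one_of_le₀ (real_inner_le_norm y z) (by positivity)
  have hδ : 0 ≤ δ := nonneg_of_mul_nonneg_left ((norm_nonneg _).trans h) ha
  have hline : ‖y‖ ^ 2 * (1 - t ^ 2) ≤ ‖y‖ ^ 2 * δ ^ 2 := by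
    have hdist := norm_sq_sub_inner_sq_div_le_norm_sub_sq y z
    have hsq := pow_le_pow_left₀ (norm_nonneg _) h 2
    have ht : ‖y‖ ^ 2 * (1 - t ^ 2) = ‖y‖ ^ 2 - ⟪y, z⟫_ℝ ^ 2 / ‖z‖ ^ 2 := by
      simp only [t]
      field_simp
    linarith
  have hsin : 1 - t ^ 2 ≤ δ ^ 2 := le_of_mul_le_mul_left hline (by positivity)
  refine pow_le_pow_iff_left₀ (norm_nonneg _) (by positivity) two_ne_zero |>.mp ?_
  rw [mul_pow, Real.sq_sqrt zero_le_two, norm_inv_smul_sub_inv_smul_sq hy hz]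
  nlinarith

end Normalize

theorem matrix_multiplication_error_general {n : ℕ} (A : Matrix (Fin n) (Fin n) ℝ)
    (κ ε₁ : ℝ) (hκ : 1 ≤ κ)
    (v : Fin n → EuclideanSpace ℝ (Fin n)) (lam : Fin n → ℝ)
    (hortho : Orthonormal ℝ v)
    (heig : ∀ i, Matrix.toEuclideanLin A (v i) = lam i • v i)
    (hlam : ∀ i, 1 / κ ≤ lam i ∧ lam i ≤ 1)
    (β εt : Fin n → ℝ) (hεt : ∀ i, |εt i| ≤ ε₁)
    (x z : EuclideanSpace ℝ (Fin n))
    (hx : x = ∑ i, β i • v i)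
    (hz : z = ∑ i, ((lam i + εt i) * β i) • v i) :
    ‖Matrix.toEuclideanLin A x - z‖ ≤ ε₁ * ‖x‖ ∧
      (Matrix.toEuclideanLin A x ≠ 0 → z ≠ 0 →
        (0 : ℝ) < inner ℝ (Matrix.toEuclideanLin A x) z →
        ‖(‖Matrix.toEuclideanLin A x‖)⁻¹ • Matrix.toEuclideanLin A x - (‖z‖)⁻¹ • z‖ ≤
          Real.sqrt 2 * ε₁ * κ) := by
  have hAx : toEuclideanLin A x = ∑ i, (lam i * β i) • v i := by
    simp only [hx, map_sum, map_smul, heig, smul_smul, mul_comm]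
  have hAxz : toEuclideanLin A x - z = ∑ i, (-(εt i * β i)) • v i := by
    rw [hAx, hz, ← Finset.sum_sub_distrib]
    congr with i
    rw [← sub_smul]
    ring_nf
  have hcond : ∀ i, |β i| ≤ κ * |lam i * β i| := fun i => by
    have hκlam : 1 ≤ κ * lam i := by
      rw [← div_le_iff₀' (by linarith)]
      exact (hlam i).1
    rw [abs_mul, abs_of_pos (by nlinarith : 0 < lam i)]
    nlinarith [abs_nonneg (β i)]
  refine ⟨?_, fun hAx0 hz0 hpos => ?_⟩
  · rw [hAxz, hx]
    refine hortho.norm_sum_smul_le_of_abs_le fun i => ?_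
    rw [abs_neg, abs_mul]
    exact mul_le_mul_of_nonneg_right (hεt i) (abs_nonneg _)
  · rw [mul_assoc]
    refine norm_inv_smul_sub_inv_smul_le hAx0 hz0 hpos.le ?_
    rw [hAxz, hAx]
    refine hortho.norm_sum_smul_le_of_abs_le fun i => ?_
    have hε : 0 ≤ ε₁ := (abs_nonneg _).trans (hεt i)
    calc |-(εt i * β i)| = |εt i| * |β i| := by rw [abs_neg, abs_mul]
      _ ≤ ε₁ * (κ * |lam i * β i|) := mul_le_mul (hεt i) (hcond i) (abs_nonneg _) hε
      _ = ε₁ * κ * |lam i * β i| := by ring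

theorem matrix_multiplication_error {n : ℕ} (A : Matrix (Fin n) (Fin n) ℝ)
    (hsymm : A.IsSymm) (κ ε₁ : ℝ) (hκ : 1 ≤ κ)
    (v : Fin n → EuclideanSpace ℝ (Fin n)) (lam : Fin n → ℝ)
    (hortho : Orthonormal ℝ v)
    (heig : ∀ i, Matrix.toEuclideanLin A (v i) = lam i • v i)
    (hlam : ∀ i, 1 / κ ≤ lam i ∧ lam i ≤ 1)
    (β εt : Fin n → ℝ) (hεt : ∀ i, |εt i| ≤ ε₁)
    (x z : EuclideanSpace ℝ (Fin n))
    (hx : x = ∑ i, β i • v i)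
    (hz : z = ∑ i, ((lam i + εt i) * β i) • v i) :
    ‖Matrix.toEuclideanLin A x - z‖ ≤ ε₁ * ‖x‖ ∧
      (Matrix.toEuclideanLin A x ≠ 0 → z ≠ 0 →
        (0 : ℝ) < inner ℝ (Matrix.toEuclideanLin A x) z →
        ‖(‖Matrix.toEuclideanLin A x‖)⁻¹ • Matrix.toEuclideanLin A x - (‖z‖)⁻¹ • z‖ ≤
          Real.sqrt 2 * ε₁ * κ) :=
  matrix_multiplication_error_general A κ ε₁ hκ v lam hortho heig hlam β εt hεt x z hx hz
end

section
/- Let A ∈ ℝ^{n×n} be symmetric positive definite with orthonormal eigensystem (v_i, λ_i) where 1/κ ≤ λ_i ≤ 1 for some κ ≥ 1. Let x = Σ_i β_i v_i be nonzero, and let z = Σ_i β_i/(λ_i + ε̃_i) v_i with |ε̃_i| ≤ ε₁ for all i, where κ ε₁ ≤ 1/2. Then ‖A^{−1}x − z‖ ≤ 2 ε₁ κ ‖A^{−1}x‖, and if ⟨A^{−1}x, z⟩ > 0 the normalized vectors satisfy ‖ A^{−1}x/‖A^{−1}x‖ − z/‖z‖ ‖ ≤ 2√2 · κ · ε₁.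 -/
/-!
In the orthonormal eigenbasis `v`, `A⁻¹` scales `v i` by `(λ i)⁻¹`, so the coefficients of
`A⁻¹x - z` are `(β i / λ i) * (ε̃ i / (λ i + ε̃ i))`. Since `λ i + ε̃ i ≥ 1/(2κ)`, each is at most
`2κε₁ |β i / λ i|`, and Parseval gives the first bound. For the second, when `⟪u, w⟫ > 0` the
angle `θ` between `u` and `w` is acute, so `‖u/‖u‖ - w/‖w‖‖² = 2(1 - cos θ) ≤ 2 sin² θ`, and
`‖u‖ sin θ ≤ ‖u - w‖` is the distance from `u` to the line through `w`.
-/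

open Matrix

namespace Matrix

variable {ι n K : Type*} [Fintype n] [DecidableEq n] [Field K] {p : ENNReal}

theorem isUnit_of_span_eigenvectors (A : Matrix n n K) {v : ι → WithLp p (n → K)} {lam : ι → K}
    (hspan : Submodule.span K (Set.range v) = ⊤)
    (heig : ∀ i, toLpLin p p A (v i) = lam i • v i) (hlam : ∀ i, lam i ≠ 0) : IsUnit A := by
  rw [isUnit_iff_isUnit_det, ← LinearMap.det_toLpLin p, ← LinearMap.isUnit_iff_isUnit_det,
    LinearMap.isUnit_iff_range_eq_top, eq_top_iff, ← hspan, Submodule.span_le]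
  rintro _ ⟨i, rfl⟩
  refine ⟨(lam i)⁻¹ • v i, ?_⟩
  rw [map_smul, heig, smul_smul, inv_mul_cancel₀ (hlam i), one_smul]

theorem toLpLin_inv_apply_eq_inv_smul {A : Matrix n n K} (hA : IsUnit A)
    {w : WithLp p (n → K)} {c : K} (h : toLpLin p p A w = c • w) (hc : c ≠ 0) :
    toLpLin p p A⁻¹ w = c⁻¹ • w := by
  have hinv : toLpLin p p A⁻¹ (toLpLin p p A w) = w := by
    rw [← LinearMap.comp_apply, ← toLpLin_mul_same,
      nonsing_inv_mul A ((isUnit_iff_isUnit_det A).mp hA), toLpLin_one, LinearMap.id_apply]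
  rw [h, map_smul] at hinv
  conv_rhs => rw [← hinv, smul_smul, inv_mul_cancel₀ hc, one_smul]

end Matrix

namespace Orthonormal

variable {𝕜 E ι : Type*} [RCLike 𝕜] [NormedAddCommGroup E] [InnerProductSpace 𝕜 E]
  {v : ι → E}

theorem norm_sum_smul_sq_s12 (hv : Orthonormal 𝕜 v) (l : ι → 𝕜) (s : Finset ι) :
    ‖∑ i ∈ s, l i • v i‖ ^ 2 = ∑ i ∈ s, ‖l i‖ ^ 2 := by
  simpa using hv.orthogonalFamily.norm_sum l s

theorem norm_sum_smul_le (hv : Orthonormal 𝕜 v) (s : Finset ι) {c d : ι → 𝕜} {C : ℝ}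
    (hC : 0 ≤ C) (h : ∀ i ∈ s, ‖c i‖ ≤ C * ‖d i‖) :
    ‖∑ i ∈ s, c i • v i‖ ≤ C * ‖∑ i ∈ s, d i • v i‖ := by
  refine le_of_sq_le_sq ?_ (by positivity)
  rw [mul_pow, hv.norm_sum_smul_sq_s12, hv.norm_sum_smul_sq_s12, Finset.mul_sum]
  gcongr with i hi
  rw [← mul_pow]
  exact pow_le_pow_left₀ (norm_nonneg _) (h i hi) 2

end Orthonormal

section RelativePerturbation

variable {κ ε l e : ℝ}

theorem one_div_two_mul_le_add (hκ : 0 < κ) (hκε : κ * ε ≤ 1 / 2) (hl : 1 / κ ≤ l)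
    (he : |e| ≤ ε) : 1 / (2 * κ) ≤ l + e := by
  have hε : ε ≤ 1 / (2 * κ) := by
    rw [le_div_iff₀ (by positivity)]
    linarith
  have h_half : 1 / κ - 1 / (2 * κ) = 1 / (2 * κ) := by
    field_simp
    ring
  linarith [neg_abs_le e]

theorem abs_div_add_le (hκ : 0 < κ) (hκε : κ * ε ≤ 1 / 2) (hl : 1 / κ ≤ l) (he : |e| ≤ ε) :
    |e / (l + e)| ≤ 2 * ε * κ := by
  have hden := one_div_two_mul_le_add hκ hκε hl he
  have hpos : 0 < l + e := lt_of_lt_of_le (by positivity) hden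
  rw [div_le_iff₀ (by positivity)] at hden
  rw [abs_div, abs_of_pos hpos, div_le_iff₀ hpos]
  nlinarith [abs_nonneg e]

theorem abs_div_sub_div_add_le (hκ : 0 < κ) (hκε : κ * ε ≤ 1 / 2) (hl : 1 / κ ≤ l)
    (he : |e| ≤ ε) (b : ℝ) : |b / l - b / (l + e)| ≤ 2 * ε * κ * |b / l| := by
  have hl0 : l ≠ 0 := (lt_of_lt_of_le (by positivity) hl).ne'
  have hle0 : l + e ≠ 0 :=
    (lt_of_lt_of_le (by positivity) (one_div_two_mul_le_add hκ hκε hl he)).ne'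
  have hfactor : b / l - b / (l + e) = b / l * (e / (l + e)) := by
    field_simp
    ring
  rw [hfactor, abs_mul, mul_comm]
  exact mul_le_mul_of_nonneg_right (abs_div_add_le hκ hκε hl he) (abs_nonneg _)

end RelativePerturbation

theorem norm_inv_smul_sub_inv_smul_le_s12 {E : Type*} [NormedAddCommGroup E]
    [InnerProductSpace ℝ E] {u w : E} (h : 0 < inner ℝ u w) :
    ‖‖u‖⁻¹ • u - ‖w‖⁻¹ • w‖ ≤ Real.sqrt 2 * ‖u - w‖ / ‖u‖ := by
  have ha : 0 < ‖u‖ := norm_pos_iff.mpr fun hu => by simp [hu] at h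
  have hb : 0 < ‖w‖ := norm_pos_iff.mpr fun hw => by simp [hw] at h
  have hCS : inner ℝ u w ≤ ‖u‖ * ‖w‖ := real_inner_le_norm u w
  have hD : ‖‖u‖⁻¹ • u - ‖w‖⁻¹ • w‖ ^ 2 = 2 - 2 * (inner ℝ u w / (‖u‖ * ‖w‖)) := by
    rw [norm_sub_sq_real, norm_smul, norm_smul, real_inner_smul_left, real_inner_smul_right,
      Real.norm_of_nonneg (inv_nonneg.mpr ha.le), Real.norm_of_nonneg (inv_nonneg.mpr hb.le)]
    field_simp
    ring
  rw [le_div_iff₀ ha]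
  refine le_of_sq_le_sq ?_ (by positivity)
  rw [mul_pow, mul_pow, hD, Real.sq_sqrt zero_le_two, norm_sub_sq_real]
  generalize inner ℝ u w = p at h hCS
  generalize ‖u‖ = a at ha hCS
  generalize ‖w‖ = b at hb hCS
  -- `a b (b³ - 2 p b + a p) = (a b - p) b³ + p b (b - a)²`
  have hkey : p * (2 * b - a) ≤ b ^ 3 := by
    nlinarith [mul_nonneg (sub_nonneg.mpr hCS) (pow_pos hb 3).le,
      mul_nonneg h.le (mul_nonneg hb.le (sq_nonneg (b - a))), mul_pos ha hb]
  field_simp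
  linarith

theorem matrix_inversion_error_general {n : ℕ} (A : Matrix (Fin n) (Fin n) ℝ)
    (κ ε₁ : ℝ) (hκ : 1 ≤ κ) (hκε : κ * ε₁ ≤ 1 / 2)
    (v : Fin n → EuclideanSpace ℝ (Fin n)) (lam : Fin n → ℝ)
    (hortho : Orthonormal ℝ v)
    (heig : ∀ i, Matrix.toEuclideanLin A (v i) = lam i • v i)
    (hlam : ∀ i, 1 / κ ≤ lam i ∧ lam i ≤ 1)
    (β εt : Fin n → ℝ) (hεt : ∀ i, |εt i| ≤ ε₁)
    (x z : EuclideanSpace ℝ (Fin n)) (hx0 : x ≠ 0)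
    (hx : x = ∑ i, β i • v i)
    (hz : z = ∑ i, (β i / (lam i + εt i)) • v i) :
    ‖Matrix.toEuclideanLin A⁻¹ x - z‖ ≤ 2 * ε₁ * κ * ‖Matrix.toEuclideanLin A⁻¹ x‖ ∧
      ((0 : ℝ) < inner ℝ (Matrix.toEuclideanLin A⁻¹ x) z →
        ‖(‖Matrix.toEuclideanLin A⁻¹ x‖)⁻¹ • Matrix.toEuclideanLin A⁻¹ x - (‖z‖)⁻¹ • z‖ ≤
          2 * Real.sqrt 2 * κ * ε₁) := by
  have hκ0 : 0 < κ := by linarith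
  have hlam0 : ∀ i, lam i ≠ 0 := fun i => (lt_of_lt_of_le (by positivity) (hlam i).1).ne'
  obtain ⟨i₀⟩ : Nonempty (Fin n) := by
    by_contra h
    rw [not_nonempty_iff] at h
    exact hx0 (by simp [hx])
  have hε₁ : 0 ≤ ε₁ := (abs_nonneg _).trans (hεt i₀)
  have hA : IsUnit A := A.isUnit_of_span_eigenvectors
    (hortho.linearIndependent.span_eq_top_of_card_eq_finrank' (by simp)) heig hlam0
  have hAx : toEuclideanLin A⁻¹ x = ∑ i, (β i / lam i) • v i := by
    simp only [hx, map_sum, map_smul, toLpLin_inv_apply_eq_inv_smul hA (heig _) (hlam0 _),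
      smul_smul, div_eq_mul_inv]
  have hpart1 : ‖toEuclideanLin A⁻¹ x - z‖ ≤ 2 * ε₁ * κ * ‖toEuclideanLin A⁻¹ x‖ := by
    rw [hAx, hz, ← Finset.sum_sub_distrib]
    simp_rw [← sub_smul]
    exact hortho.norm_sum_smul_le _ (by positivity) fun i _ =>
      abs_div_sub_div_add_le hκ0 hκε (hlam i).1 (hεt i) (β i)
  refine ⟨hpart1, fun hpos => ?_⟩
  have hu : 0 < ‖toEuclideanLin A⁻¹ x‖ := norm_pos_iff.mpr fun h => by simp [h] at hpos
  calc _ ≤ Real.sqrt 2 * ‖toEuclideanLin A⁻¹ x - z‖ / ‖toEuclideanLin A⁻¹ x‖ :=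
        norm_inv_smul_sub_inv_smul_le_s12 hpos
    _ ≤ Real.sqrt 2 * (2 * ε₁ * κ * ‖toEuclideanLin A⁻¹ x‖) / ‖toEuclideanLin A⁻¹ x‖ := by
        gcongr
    _ = 2 * Real.sqrt 2 * κ * ε₁ := by field_simp

theorem matrix_inversion_error {n : ℕ} (A : Matrix (Fin n) (Fin n) ℝ)
    (hsymm : A.IsSymm) (κ ε₁ : ℝ) (hκ : 1 ≤ κ) (hκε : κ * ε₁ ≤ 1 / 2)
    (v : Fin n → EuclideanSpace ℝ (Fin n)) (lam : Fin n → ℝ)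
    (hortho : Orthonormal ℝ v)
    (heig : ∀ i, Matrix.toEuclideanLin A (v i) = lam i • v i)
    (hlam : ∀ i, 1 / κ ≤ lam i ∧ lam i ≤ 1)
    (β εt : Fin n → ℝ) (hεt : ∀ i, |εt i| ≤ ε₁)
    (x z : EuclideanSpace ℝ (Fin n)) (hx0 : x ≠ 0)
    (hx : x = ∑ i, β i • v i)
    (hz : z = ∑ i, (β i / (lam i + εt i)) • v i) :
    ‖Matrix.toEuclideanLin A⁻¹ x - z‖ ≤ 2 * ε₁ * κ * ‖Matrix.toEuclideanLin A⁻¹ x‖ ∧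
      ((0 : ℝ) < inner ℝ (Matrix.toEuclideanLin A⁻¹ x) z →
        ‖(‖Matrix.toEuclideanLin A⁻¹ x‖)⁻¹ • Matrix.toEuclideanLin A⁻¹ x - (‖z‖)⁻¹ • z‖ ≤
          2 * Real.sqrt 2 * κ * ε₁) :=
  matrix_inversion_error_general A κ ε₁ hκ hκε v lam hortho heig hlam β εt hεt x z hx0 hx hz
end
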